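/- arXiv:math/0104020 — 2 statements merged into one kernel-verified Lean document; each statement's English description precedes it below -/
import Mathlib

section
/- The closed subgroup of SO(n) generated by the set of matrices of the form N⁻¹(NNᵀ)^{1/2}, where N ranges over all products of two symmetric positive definite n×n real matrices, coincides with SO(n). Equivalently, the smallest topologically closed subgroup of SO(n) containing {N⁻¹(NNᵀ)^{1/2} : N ∈ K} is all of SO(n). -/
open Matrix
open scoped Classical

/-- The unique symmetric positive semidefinite square root of a positive semidefinite
real matrix (junk value `0` for matrices that are not positive semidefinite). -/
noncomputable def msqrt {n : ℕ} (A : Matrix (Fin n) (Fin n) ℝ) :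
    Matrix (Fin n) (Fin n) ℝ :=
  if h : A.PosSemidef then
    (h.1.eigenvectorUnitary : Matrix (Fin n) (Fin n) ℝ) *
      diagonal ((↑) ∘ (√·) ∘ h.1.eigenvalues) *
      (star (h.1.eigenvectorUnitary : Matrix (Fin n) (Fin n) ℝ))
  else 0

/-- `SO(n)`, the set of `n × n` real orthogonal matrices of determinant `1`. -/
def SOset (n : ℕ) : Set (Matrix (Fin n) (Fin n) ℝ) :=
  {Q | Q * Qᵀ = 1 ∧ Q.det = 1}

/-- The generating set: all matrices `N⁻¹ * (N * Nᵀ)^{1/2}` where `N` ranges over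
products of two symmetric positive definite matrices. -/
def genSet (n : ℕ) : Set (Matrix (Fin n) (Fin n) ℝ) :=
  {Q | ∃ N X S : Matrix (Fin n) (Fin n) ℝ, X.PosDef ∧ S.PosDef ∧ N = X * S ∧
    Q = N⁻¹ * msqrt (N * Nᵀ)}

/-!
Since `det (X S) > 0`, the matrix `N⁻¹ (N Nᵀ)^{1/2}` is the orthogonal factor of the polar
decomposition of `N = X S`, so it lies in `SO(n)`. Conversely a rotation `R` is a generator as soon
as `X S R` is positive definite for some positive definite `X` and `S`. In a coordinate plane such
`X` and `S` can be written down for every rotation angle `θ` with `2 |sin θ| < cos θ`, so the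
generators contain all Givens rotations by small angles, and their powers give all Givens
rotations. Givens rotations generate `SO(n)` as a monoid: rotating the entries of a column one at
a time into the diagonal entry and using orthogonality clears one row and one column at a time,
and at the last step the sign of the remaining entry is fixed by `det = 1`. So already the
submonoid generated by the matrices `N⁻¹ (N Nᵀ)^{1/2}` is all of `SO(n)`.
-/

open scoped MatrixOrder ComplexOrder

namespace Matrix

variable {m n : Type*} [Fintype m] [Fintype n] [DecidableEq m] [DecidableEq n]

section Ring

variable {R : Type*} [Ring R]

/-- `embedBlock f A` acts as `A` on the coordinates in the range of `f` and as the identity on the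
other coordinates. -/
def embedBlock (f : m → n) (A : Matrix m m R) : Matrix n n R :=
  1 + (1 : Matrix n n R).submatrix id f * (A - 1) * (1 : Matrix n n R).submatrix f id

variable {f : m → n}

omit [Fintype m] in
theorem submatrix_one_mul_submatrix_one (hf : f.Injective) :
    (1 : Matrix n n R).submatrix f id * (1 : Matrix n n R).submatrix id f = 1 := by
  rw [← submatrix_mul _ _ _ _ _ Function.bijective_id, Matrix.mul_one, submatrix_one _ hf]

omit [Fintype n] in
@[simp]
theorem embedBlock_one : embedBlock f (1 : Matrix m m R) = 1 := by
  simp [embedBlock]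

theorem embedBlock_mul (hf : f.Injective) (A B : Matrix m m R) :
    embedBlock f (A * B) = embedBlock f A * embedBlock f B := by
  have hAB : A * B - 1 = (A - 1) + (B - 1) + (A - 1) * (B - 1) := by noncomm_ring
  have h1 : ∀ X Y : Matrix n n R, (1 + X) * (1 + Y) = 1 + (X + Y + X * Y) := by
    intro X Y; noncomm_ring
  simp only [embedBlock]
  set U := (1 : Matrix n n R).submatrix id f
  set V := (1 : Matrix n n R).submatrix f id
  have hUV : U * (A - 1) * V * (U * (B - 1) * V) = U * ((A - 1) * (B - 1)) * V := by
    simp only [Matrix.mul_assoc]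
    rw [← Matrix.mul_assoc V U, submatrix_one_mul_submatrix_one hf, Matrix.one_mul]
  rw [h1, hUV, hAB, Matrix.mul_add, Matrix.mul_add, Matrix.add_mul, Matrix.add_mul]

theorem embedBlock_pow (hf : f.Injective) (A : Matrix m m R) (k : ℕ) :
    embedBlock f (A ^ k) = embedBlock f A ^ k := by
  induction k with
  | zero => simp
  | succ k ih => rw [pow_succ, embedBlock_mul hf, ih, pow_succ]

theorem embedBlock_mulVec (A : Matrix m m R) (x : n → R) :
    embedBlock f A *ᵥ x = x + (1 : Matrix n n R).submatrix id f *ᵥ ((A - 1) *ᵥ (x ∘ f)) := by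
  rw [embedBlock, add_mulVec, one_mulVec, ← mulVec_mulVec, ← mulVec_mulVec]
  congr
  ext a
  simp [mulVec, dotProduct, one_apply]

omit [Fintype n] in
theorem submatrix_one_mulVec_apply (hf : f.Injective) (y : m → R) (a : m) :
    ((1 : Matrix n n R).submatrix id f *ᵥ y) (f a) = y a := by
  simp [mulVec, dotProduct, one_apply, hf.eq_iff]

omit [Fintype n] [DecidableEq m] in
theorem submatrix_one_mulVec_apply_of_notMem {p : n} (hp : p ∉ Set.range f) (y : m → R) :
    ((1 : Matrix n n R).submatrix id f *ᵥ y) p = 0 := by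
  simp only [mulVec, dotProduct, submatrix_apply, id, one_apply, ite_mul, one_mul, zero_mul]
  exact Finset.sum_eq_zero fun a _ => if_neg fun h => hp ⟨a, h.symm⟩

theorem embedBlock_mulVec_apply (hf : f.Injective) (A : Matrix m m R) (x : n → R) (a : m) :
    (embedBlock f A *ᵥ x) (f a) = (A *ᵥ (x ∘ f)) a := by
  rw [embedBlock_mulVec, Pi.add_apply, submatrix_one_mulVec_apply hf, sub_mulVec, one_mulVec]
  simp

theorem embedBlock_mulVec_apply_of_notMem {p : n} (hp : p ∉ Set.range f) (A : Matrix m m R)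
    (x : n → R) : (embedBlock f A *ᵥ x) p = x p := by
  rw [embedBlock_mulVec, Pi.add_apply, submatrix_one_mulVec_apply_of_notMem hp, add_zero]

theorem embedBlock_mulVec_of_comp_eq_zero (A : Matrix m m R) {x : n → R} (hx : x ∘ f = 0) :
    embedBlock f A *ᵥ x = x := by
  rw [embedBlock_mulVec, hx, mulVec_zero, mulVec_zero, add_zero]

end Ring

omit [Fintype n] in
theorem embedBlock_transpose {R : Type*} [CommRing R] (f : m → n) (A : Matrix m m R) :
    (embedBlock f A)ᵀ = embedBlock f Aᵀ := by
  simp [embedBlock, transpose_mul, transpose_submatrix, Matrix.mul_assoc]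

theorem det_embedBlock {R : Type*} [CommRing R] {f : m → n} (hf : f.Injective)
    (A : Matrix m m R) : (embedBlock f A).det = A.det := by
  rw [embedBlock, Matrix.mul_assoc, det_one_add_mul_comm, Matrix.mul_assoc,
    submatrix_one_mul_submatrix_one hf, Matrix.mul_one, add_sub_cancel]

theorem posDef_embedBlock {𝕜 : Type*} [RCLike 𝕜] {f : m → n} (hf : f.Injective)
    {A : Matrix m m 𝕜} (hA : A.PosDef) : (embedBlock f A).PosDef := by
  set U := (1 : Matrix n n 𝕜).submatrix id f
  have hU : Uᴴ = (1 : Matrix n n 𝕜).submatrix f id := by simp [U, conjTranspose_submatrix]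
  have hUU : Uᴴ * U = 1 := by rw [hU]; exact submatrix_one_mul_submatrix_one hf
  have hE : embedBlock f A = 1 + U * (A - 1) * Uᴴ := by rw [hU]; rfl
  have hP : (1 - U * Uᴴ)ᴴ * (1 - U * Uᴴ) = 1 - U * Uᴴ := by
    have : U * Uᴴ * (U * Uᴴ) = U * Uᴴ := by
      rw [Matrix.mul_assoc, ← Matrix.mul_assoc Uᴴ, hUU, Matrix.one_mul]
    simp only [conjTranspose_sub, conjTranspose_one, conjTranspose_mul, conjTranspose_conjTranspose,
      Matrix.sub_mul, Matrix.mul_sub, Matrix.one_mul, Matrix.mul_one, this]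
    abel
  have hpsd : (embedBlock f A).PosSemidef := by
    have : embedBlock f A = (1 - U * Uᴴ)ᴴ * (1 - U * Uᴴ) + Uᴴᴴ * A * Uᴴ := by
      rw [hP, hE, conjTranspose_conjTranspose]
      simp only [Matrix.mul_sub, Matrix.sub_mul, Matrix.mul_one]
      abel
    rw [this]
    exact (posSemidef_conjTranspose_mul_self _).add (hA.posSemidef.conjTranspose_mul_mul_same _)
  exact hpsd.posDef_iff_det_ne_zero.mpr (by rw [det_embedBlock hf]; exact hA.det_pos.ne')

theorem posDef_fin_two {a b d : ℝ} (ha : 0 < a) (hb : b * b < a * d) :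
    !![a, b; b, d].PosDef := by
  refine .of_dotProduct_mulVec_pos ?_ fun x hx => ?_
  · ext i j; fin_cases i <;> fin_cases j <;> simp
  · have hx' : x 0 ≠ 0 ∨ x 1 ≠ 0 := by
      by_contra! h
      exact hx (funext fun i => by fin_cases i <;> simp [h.1, h.2])
    simp only [star_trivial, dotProduct, mulVec, Fin.sum_univ_two, of_apply, cons_val',
      cons_val_zero, cons_val_one, empty_val', cons_val_fin_one]
    by_cases h1 : x 1 = 0
    · have h0 : x 0 ≠ 0 := hx'.resolve_right (not_not.mpr h1)
      simp only [h1, mul_zero, add_zero]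
      have := mul_self_pos.mpr h0
      nlinarith
    · nlinarith [sq_nonneg (a * x 0 + b * x 1), mul_pos (sub_pos.mpr hb) (mul_self_pos.mpr h1)]

noncomputable def planeRotation (θ : ℝ) : Matrix (Fin 2) (Fin 2) ℝ :=
  !![Real.cos θ, -Real.sin θ; Real.sin θ, Real.cos θ]

theorem planeRotation_add (θ φ : ℝ) :
    planeRotation (θ + φ) = planeRotation θ * planeRotation φ := by
  simp only [planeRotation, mul_fin_two, Real.cos_add, Real.sin_add]
  congr 1; ring_nf

theorem planeRotation_zero : planeRotation 0 = 1 := by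
  simp [planeRotation, one_fin_two]

theorem planeRotation_nat_mul (k : ℕ) (θ : ℝ) :
    planeRotation (k * θ) = planeRotation θ ^ k := by
  induction k with
  | zero => simp [planeRotation_zero]
  | succ k ih => rw [Nat.cast_succ, add_one_mul, planeRotation_add, ih, pow_succ]

theorem planeRotation_transpose (θ : ℝ) : (planeRotation θ)ᵀ = planeRotation (-θ) := by
  ext i j; fin_cases i <;> fin_cases j <;> simp [planeRotation]

theorem det_planeRotation (θ : ℝ) : (planeRotation θ).det = 1 := by
  simp [planeRotation, det_fin_two, ← sq, Real.cos_sq_add_sin_sq]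

theorem exists_planeRotation_mulVec (v : Fin 2 → ℝ) :
    ∃ θ, (planeRotation θ *ᵥ v) 0 = 0 ∧ 0 ≤ (planeRotation θ *ᵥ v) 1 := by
  by_cases hv : v = 0
  · exact ⟨0, by simp [hv]⟩
  set z : ℂ := ⟨v 1, v 0⟩
  have hz : z ≠ 0 := fun h => hv (funext fun i => by
    fin_cases i
    · exact congrArg Complex.im h
    · exact congrArg Complex.re h)
  refine ⟨z.arg, ?_, ?_⟩ <;>
    simp only [planeRotation, mulVec, dotProduct, Fin.sum_univ_two, of_apply, cons_val',
      cons_val_zero, cons_val_one, empty_val', cons_val_fin_one,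
      Complex.cos_arg hz, Complex.sin_arg]
  · simp [z]; ring
  · rw [div_mul_eq_mul_div, div_mul_eq_mul_div, ← add_div]
    exact div_nonneg (add_nonneg (mul_self_nonneg _) (mul_self_nonneg _)) (norm_nonneg _)

noncomputable def givens {n : Type*} [Fintype n] [DecidableEq n] (i j : n) (θ : ℝ) : Matrix n n ℝ :=
  embedBlock ![i, j] (planeRotation θ)

section Givens

variable {n : Type*} [Fintype n] [DecidableEq n] {i j : n}

theorem givens_nat_mul (hij : i ≠ j) (k : ℕ) (θ : ℝ) :
    givens i j (k * θ) = givens i j θ ^ k := by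
  rw [givens, planeRotation_nat_mul, embedBlock_pow (injective_pair_iff_ne.mpr hij), givens]

theorem givens_neg_mul_givens (hij : i ≠ j) (θ : ℝ) : givens i j (-θ) * givens i j θ = 1 := by
  rw [givens, givens, ← embedBlock_mul (injective_pair_iff_ne.mpr hij), ← planeRotation_add,
    neg_add_cancel, planeRotation_zero, embedBlock_one]

theorem givens_mem_specialOrthogonalGroup (hij : i ≠ j) (θ : ℝ) :
    givens i j θ ∈ specialOrthogonalGroup n ℝ := by
  have hf := injective_pair_iff_ne.mpr hij
  refine ⟨(mem_orthogonalGroup_iff n ℝ).mpr ?_, (det_embedBlock hf _).trans (det_planeRotation θ)⟩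
  rw [givens, embedBlock_transpose, ← embedBlock_mul hf, planeRotation_transpose,
    ← planeRotation_add, add_neg_cancel, planeRotation_zero, embedBlock_one]

theorem givens_mulVec_apply_of_ne {p : n} (hpi : p ≠ i) (hpj : p ≠ j) (θ : ℝ) (x : n → ℝ) :
    (givens i j θ *ᵥ x) p = x p :=
  embedBlock_mulVec_apply_of_notMem (by simp [hpi, hpj]) _ x

theorem givens_mulVec_single {q : n} (hqi : q ≠ i) (hqj : q ≠ j) (θ : ℝ) :
    givens i j θ *ᵥ Pi.single q 1 = Pi.single q 1 :=
  embedBlock_mulVec_of_comp_eq_zero _ <| funext fun a => by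
    fin_cases a <;> simp [hqi.symm, hqj.symm]

theorem exists_givens_mulVec (hij : i ≠ j) (x : n → ℝ) :
    ∃ θ, (givens i j θ *ᵥ x) i = 0 ∧ 0 ≤ (givens i j θ *ᵥ x) j := by
  have hf := injective_pair_iff_ne.mpr hij
  obtain ⟨θ, h0, h1⟩ := exists_planeRotation_mulVec (x ∘ ![i, j])
  exact ⟨θ, embedBlock_mulVec_apply hf _ x 0 ▸ h0, embedBlock_mulVec_apply hf _ x 1 ▸ h1⟩

end Givens

end Matrix

theorem SOset_eq (n : ℕ) : SOset n = specialOrthogonalGroup (Fin n) ℝ := by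
  ext Q
  simp [SOset, mem_specialOrthogonalGroup_iff, mem_orthogonalGroup_iff]

theorem transpose_mem_specialOrthogonalGroup {n : Type*} [Fintype n] [DecidableEq n]
    {Q : Matrix n n ℝ} (hQ : Q ∈ specialOrthogonalGroup n ℝ) :
    Qᵀ ∈ specialOrthogonalGroup n ℝ :=
  mem_specialOrthogonalGroup_iff.mpr
    ⟨transpose_mem_unitaryGroup_iff.mpr hQ.1, by rw [det_transpose]; exact hQ.2⟩

def givensRotations (n : Type*) [Fintype n] [DecidableEq n] : Set (Matrix n n ℝ) :=
  {g | ∃ i j θ, i ≠ j ∧ givens i j θ = g}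

theorem closure_givensRotations_le (n : Type*) [Fintype n] [DecidableEq n] :
    Submonoid.closure (givensRotations n) ≤ specialOrthogonalGroup n ℝ :=
  Submonoid.closure_le.mpr <| by
    rintro _ ⟨i, j, θ, hij, rfl⟩
    exact givens_mem_specialOrthogonalGroup hij θ

section Elimination

variable {n : ℕ}

def FixesBasisFrom (k : ℕ) (Q : Matrix (Fin n) (Fin n) ℝ) : Prop :=
  ∀ q : Fin n, k ≤ q → Q *ᵥ Pi.single q 1 = Pi.single q 1

variable {k : ℕ} {P Q : Matrix (Fin n) (Fin n) ℝ}

theorem FixesBasisFrom.of_le (h : n ≤ k) : FixesBasisFrom k Q :=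
  fun q hq => absurd q.isLt (by omega)

theorem FixesBasisFrom.apply (h : FixesBasisFrom k Q) {q : Fin n} (hq : k ≤ q) (p : Fin n) :
    Q p q = (1 : Matrix (Fin n) (Fin n) ℝ) p q := by
  simpa [mulVec_single_one, one_apply, Pi.single_apply] using congrFun (h q hq) p

theorem FixesBasisFrom.mul (hP : FixesBasisFrom k P) (hQ : FixesBasisFrom k Q) :
    FixesBasisFrom k (P * Q) :=
  fun q hq => by rw [← mulVec_mulVec, hQ q hq, hP q hq]

theorem FixesBasisFrom.transpose (hQ : Qᵀ * Q = 1) (h : FixesBasisFrom k Q) :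
    FixesBasisFrom k Qᵀ := fun q hq =>
  calc Qᵀ *ᵥ Pi.single q 1 = Qᵀ *ᵥ (Q *ᵥ Pi.single q 1) := by rw [h q hq]
    _ = Pi.single q 1 := by rw [mulVec_mulVec, hQ, one_mulVec]

theorem fixesBasisFrom_givens {i j : Fin n} (hik : i < k) (hjk : j < k) (θ : ℝ) :
    FixesBasisFrom k (givens i j θ) :=
  fun q hq => givens_mulVec_single (by omega) (by omega) θ

theorem FixesBasisFrom.eq_one (hQ : Q ∈ specialOrthogonalGroup (Fin n) ℝ)
    (h : FixesBasisFrom 1 Q) : Q = 1 := by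
  have hrow : ∀ p q : Fin n, 1 ≤ (p : ℕ) → Q p q = (1 : Matrix (Fin n) (Fin n) ℝ) p q :=
    fun p q hp => by
      simpa [one_apply, eq_comm] using
        (h.transpose ((mem_orthogonalGroup_iff' _ _).mp hQ.1)).apply hp q
  rcases n with _ | n
  · exact Subsingleton.elim _ _
  have h00 : Q 0 0 = 1 := by
    have htri : Q.IsUpperTriangular := fun p q (hqp : q < p) => by
      rw [hrow p q (by omega), one_apply_ne (by omega)]
    rw [← (mem_specialOrthogonalGroup_iff.mp hQ).2, det_of_isUpperTriangular htri,
      Fin.prod_univ_succ, Finset.prod_eq_one fun p _ => by rw [hrow _ _ (by simp), one_apply_eq],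
      mul_one]
  ext p q
  by_cases hp : 1 ≤ (p : ℕ)
  · exact hrow p q hp
  by_cases hq : 1 ≤ (q : ℕ)
  · exact h.apply hq p
  obtain rfl : p = 0 := Fin.ext (by rw [Fin.val_zero]; omega)
  obtain rfl : q = 0 := Fin.ext (by rw [Fin.val_zero]; omega)
  simpa using h00

/-- Each rotation leaves a nonnegative `j`-th coordinate, so the sign condition is only needed
when no rotation is performed. -/
theorem exists_mem_closure_mulVec_single_eq (j : Fin n) :
    ∀ m ≤ (j : ℕ), ∀ x : Fin n → ℝ, (∀ p, p ≠ j → m ≤ (p : ℕ) → x p = 0) → (m = 0 → 0 ≤ x j) →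
      ∃ P ∈ Submonoid.closure (givensRotations (Fin n)), FixesBasisFrom (j + 1) P ∧
        ∃ r, 0 ≤ r ∧ P *ᵥ Pi.single j r = x := by
  intro m
  induction m with
  | zero =>
    intro _ x hx hxj
    refine ⟨1, one_mem _, fun q _ => one_mulVec _, x j, hxj rfl, ?_⟩
    ext p
    by_cases hp : p = j
    · subst hp; simp
    · simp [hp, hx p hp (Nat.zero_le _)]
  | succ m ih =>
    intro hm x hx _
    set i : Fin n := ⟨m, by omega⟩
    have hij : i ≠ j := Fin.ne_of_val_ne (by simp only [i]; omega)
    obtain ⟨θ, hi, hj⟩ := exists_givens_mulVec hij x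
    have hy : ∀ p, p ≠ j → m ≤ (p : ℕ) → (givens i j θ *ᵥ x) p = 0 := fun p hpj hmp => by
      by_cases hpi : p = i
      · rwa [hpi]
      rw [givens_mulVec_apply_of_ne hpi hpj]
      exact hx p hpj (by have : (p : ℕ) ≠ m := fun h => hpi (Fin.ext h); omega)
    obtain ⟨P, hPC, hPfix, r, hr, hPr⟩ := ih (by omega) _ hy fun _ => hj
    refine ⟨givens i j (-θ) * P, mul_mem (Submonoid.subset_closure ⟨i, j, -θ, hij, rfl⟩) hPC,
      (fixesBasisFrom_givens (by simp only [i]; omega) (by omega) _).mul hPfix, r, hr, ?_⟩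
    rw [← mulVec_mulVec, hPr, mulVec_mulVec, givens_neg_mul_givens hij, one_mulVec]

theorem eq_one_of_mulVec_single_eq {j : Fin n} {r : ℝ} (hQ : Qᵀ * Q = 1) (hr : 0 ≤ r)
    (h : Q *ᵥ Pi.single j 1 = Pi.single j r) : r = 1 := by
  have hcol : ∀ p, Q p j = (Pi.single j r : Fin n → ℝ) p := fun p => by
    rw [← h, mulVec_single_one, col_apply]
  have hrr : r * r = 1 := by
    simpa [mul_apply, hcol, Pi.single_apply] using congrFun (congrFun hQ j) j
  nlinarith

theorem exists_mem_closure_transpose_mul_fixesBasisFrom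
    (hQ : Q ∈ specialOrthogonalGroup (Fin n) ℝ) {j : Fin n} (hj : 0 < (j : ℕ))
    (hfix : FixesBasisFrom (j + 1) Q) :
    ∃ P ∈ Submonoid.closure (givensRotations (Fin n)), P * (Pᵀ * Q) = Q ∧
      Pᵀ * Q ∈ specialOrthogonalGroup (Fin n) ℝ ∧ FixesBasisFrom j (Pᵀ * Q) := by
  have hQt := (mem_orthogonalGroup_iff' _ _).mp hQ.1
  have hcol : ∀ p, p ≠ j → (j : ℕ) ≤ p → (Q *ᵥ Pi.single j 1) p = 0 := fun p hpj hp => by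
    have hpj' : (p : ℕ) ≠ j := fun h => hpj (Fin.ext h)
    simpa [mulVec_single_one, one_apply, Ne.symm hpj] using
      (hfix.transpose hQt).apply (q := p) (by omega) j
  obtain ⟨P, hPC, hPfix, r, hr, hPr⟩ :=
    exists_mem_closure_mulVec_single_eq j j le_rfl _ hcol (absurd · hj.ne')
  have hP := closure_givensRotations_le _ hPC
  have hPt := (mem_orthogonalGroup_iff' _ _).mp hP.1
  have hPQ : Pᵀ * Q ∈ specialOrthogonalGroup (Fin n) ℝ :=
    mul_mem (transpose_mem_specialOrthogonalGroup hP) hQ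
  have hPQj : (Pᵀ * Q) *ᵥ Pi.single j 1 = Pi.single j r := by
    rw [← mulVec_mulVec, ← hPr, mulVec_mulVec, hPt, one_mulVec]
  have hr1 : r = 1 := eq_one_of_mulVec_single_eq ((mem_orthogonalGroup_iff' _ _).mp hPQ.1) hr hPQj
  refine ⟨P, hPC, ?_, hPQ, fun q hq => ?_⟩
  · rw [← Matrix.mul_assoc, (mem_orthogonalGroup_iff _ _).mp hP.1, Matrix.one_mul]
  · rcases eq_or_lt_of_le hq with hq | hq
    · obtain rfl : q = j := Fin.ext hq.symm
      rw [hPQj, hr1]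
    · exact ((hPfix.transpose hPt).mul hfix) q hq

end Elimination

theorem specialOrthogonalGroup_le_closure_givensRotations (n : ℕ) :
    specialOrthogonalGroup (Fin n) ℝ ≤ Submonoid.closure (givensRotations (Fin n)) := by
  suffices h : ∀ k, ∀ Q ∈ specialOrthogonalGroup (Fin n) ℝ, FixesBasisFrom (k + 1) Q →
      Q ∈ Submonoid.closure (givensRotations (Fin n)) from
    fun Q hQ => h n Q hQ (.of_le (by omega))
  intro k
  induction k with
  | zero =>
    intro Q hQ hfix
    rw [hfix.eq_one hQ]
    exact one_mem _
  | succ k ih =>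
    intro Q hQ hfix
    by_cases hkn : n ≤ k + 1
    · exact ih Q hQ (.of_le hkn)
    obtain ⟨P, hPC, hPQ, hSO, hPQfix⟩ :=
      exists_mem_closure_transpose_mul_fixesBasisFrom hQ (j := ⟨k + 1, by omega⟩) k.succ_pos hfix
    rw [← hPQ]
    exact mul_mem hPC (ih _ hSO hPQfix)

theorem msqrt_eq_sqrt {n : ℕ} {A : Matrix (Fin n) (Fin n) ℝ} (h : A.PosSemidef) :
    msqrt A = CFC.sqrt A := by
  rw [msqrt, dif_pos h, CFC.sqrt_eq_cfc, cfc_nnreal_eq_real _ A, h.1.cfc_eq]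
  simp only [IsHermitian.cfc, Unitary.conjStarAlgAut_apply]
  congr 3
  funext k
  simp [Real.coe_toNNReal', max_eq_left (h.eigenvalues_nonneg k)]

theorem inv_mul_msqrt_mem_SOset {n : ℕ} {N : Matrix (Fin n) (Fin n) ℝ} (hN : 0 < N.det) :
    N⁻¹ * msqrt (N * Nᵀ) ∈ SOset n := by
  have hpsd : (N * Nᵀ).PosSemidef := by
    simpa using posSemidef_self_mul_conjTranspose N
  rw [msqrt_eq_sqrt hpsd]
  set T := CFC.sqrt (N * Nᵀ)
  have hT : Tᵀ = T := by
    simpa [IsHermitian] using (CFC.sqrt_nonneg (N * Nᵀ)).posSemidef.isHermitian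
  have hTT : T * T = N * Nᵀ := CFC.sqrt_mul_sqrt_self _ hpsd.nonneg
  have hNt : IsUnit Nᵀ.det := by rw [det_transpose]; exact hN.ne'.isUnit
  constructor
  · rw [transpose_mul, hT, transpose_nonsing_inv, Matrix.mul_assoc, ← Matrix.mul_assoc T, hTT,
      Matrix.mul_assoc, mul_nonsing_inv _ hNt, Matrix.mul_one, nonsing_inv_mul _ hN.ne'.isUnit]
  · rw [det_mul, det_nonsing_inv, Ring.inverse_eq_inv', hpsd.det_sqrt, RCLike.sqrt_real, det_mul,
      det_transpose, Real.sqrt_mul_self hN.le, inv_mul_cancel₀ hN.ne']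

theorem genSet_subset_SOset (n : ℕ) : genSet n ⊆ SOset n := by
  rintro _ ⟨N, X, S, hX, hS, rfl, rfl⟩
  exact inv_mul_msqrt_mem_SOset (by rw [det_mul]; exact mul_pos hX.det_pos hS.det_pos)

theorem mem_genSet_of_posDef_mul {n : ℕ} {X S R : Matrix (Fin n) (Fin n) ℝ} (hX : X.PosDef)
    (hS : S.PosDef) (hR : Rᵀ * R = 1) (hM : (X * S * R).PosDef) : R ∈ genSet n := by
  refine ⟨X * S, X, S, hX, hS, rfl, ?_⟩
  set M := X * S * R
  have hMt : Mᵀ = M := by simpa [IsHermitian] using hM.isHermitian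
  have hNN : X * S * (X * S)ᵀ = M * M := by
    conv_lhs => rw [← Matrix.mul_one (X * S), ← mul_eq_one_comm.mp hR, ← Matrix.mul_assoc]
    rw [transpose_mul, transpose_transpose, Matrix.mul_assoc M, ← Matrix.mul_assoc Rᵀ, hR,
      Matrix.one_mul, hMt]
  have hpsd : (M * M).PosSemidef := by simpa [hMt] using posSemidef_self_mul_conjTranspose M
  rw [hNN, msqrt_eq_sqrt hpsd, CFC.sqrt_mul_self M hM.posSemidef.nonneg]
  exact (nonsing_inv_mul_cancel_left _ _
    (by rw [det_mul]; exact (mul_pos hX.det_pos hS.det_pos).ne'.isUnit)).symm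

theorem givens_mem_genSet {n : ℕ} {i j : Fin n} (hij : i ≠ j) {θ : ℝ}
    (hθ : 2 * |Real.sin θ| < Real.cos θ) : givens i j θ ∈ genSet n := by
  have hf := injective_pair_iff_ne.mpr hij
  set c := Real.cos θ with hc
  set s := Real.sin θ with hs
  have hcs : s ^ 2 + c ^ 2 = 1 := Real.sin_sq_add_cos_sq θ
  have h1 : 0 < c + 2 * s := by cases abs_cases s <;> linarith
  have h2 : 0 < c - 2 * s := by cases abs_cases s <;> linarith
  have h3 : 0 < 2 * c + s := by cases abs_cases s <;> linarith
  -- The diagonal of `X` makes `X * S * R` symmetric; its determinant is `3 (c² - 4 s²) > 0`.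
  have hprod : !![c + 2 * s, 0; 0, c - 2 * s] * !![2, 1; 1, 2] * planeRotation θ =
      !![(c + 2 * s) * (2 * c + s), (c + 2 * s) * (c - 2 * s);
        (c + 2 * s) * (c - 2 * s), (c - 2 * s) * (2 * c - s)] := by
    simp only [planeRotation, mul_fin_two, ← hc, ← hs]
    ring_nf
  have hX : !![c + 2 * s, 0; 0, c - 2 * s].PosDef :=
    posDef_fin_two h1 (by simpa using mul_pos h1 h2)
  have hS : !![(2 : ℝ), 1; 1, 2].PosDef := posDef_fin_two two_pos (by norm_num)
  refine mem_genSet_of_posDef_mul (posDef_embedBlock hf hX) (posDef_embedBlock hf hS)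
    ((mem_orthogonalGroup_iff' _ _).mp (givens_mem_specialOrthogonalGroup hij θ).1) ?_
  rw [givens, ← embedBlock_mul hf, ← embedBlock_mul hf, hprod]
  refine posDef_embedBlock hf (posDef_fin_two (by positivity) ?_)
  nlinarith [mul_pos h1 h2]

theorem two_mul_abs_sin_lt_cos {x : ℝ} (hx : |x| ≤ 1 / 4) : 2 * |Real.sin x| < Real.cos x := by
  have h1 := Real.abs_sin_le_abs (x := x)
  have h2 := Real.one_sub_sq_div_two_le_cos (x := x)
  have h3 : x ^ 2 ≤ 1 / 16 := by
    rw [← sq_abs]; nlinarith [abs_nonneg x]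
  linarith

theorem givens_mem_of_genSet_subset {n : ℕ} {G : Submonoid (Matrix (Fin n) (Fin n) ℝ)}
    (hG : genSet n ⊆ G) {i j : Fin n} (hij : i ≠ j) (θ : ℝ) : givens i j θ ∈ G := by
  set N := ⌈4 * |θ|⌉₊ + 1
  have hN : (0 : ℝ) < N := by positivity
  have hsmall : |θ / N| ≤ 1 / 4 := by
    rw [abs_div, Nat.abs_cast, div_le_iff₀ hN]
    have := Nat.le_ceil (4 * |θ|)
    push_cast [N]
    linarith
  rw [show θ = N * (θ / N) by field_simp, givens_nat_mul hij]
  exact pow_mem (hG (givens_mem_genSet hij (two_mul_abs_sin_lt_cos hsmall))) N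

theorem isClosed_SOset (n : ℕ) : IsClosed (SOset n) :=
  (isClosed_eq (continuous_id.matrix_mul continuous_id.matrix_transpose) continuous_const).inter
    (isClosed_eq continuous_id.matrix_det continuous_const)

/-- The smallest topologically closed subgroup of `SO(n)` containing all matrices of
the form `N⁻¹ (N Nᵀ)^{1/2}` with `N` a product of two symmetric positive definite
matrices coincides with `SO(n)`: the intersection of all closed subsets of `SO(n)`
that contain the generating set and are closed under multiplication and inversion
is all of `SO(n)`. -/
theorem statement4 (n : ℕ) :
    ⋂₀ {G : Set (Matrix (Fin n) (Fin n) ℝ) |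
        IsClosed G ∧ G ⊆ SOset n ∧ (1 : Matrix (Fin n) (Fin n) ℝ) ∈ G ∧
        (∀ a ∈ G, ∀ b ∈ G, a * b ∈ G) ∧ (∀ a ∈ G, a⁻¹ ∈ G) ∧ genSet n ⊆ G} =
      SOset n := by
  have hSO : (SOset n : Set _) = specialOrthogonalGroup (Fin n) ℝ := SOset_eq n
  refine subset_antisymm (Set.sInter_subset_of_mem ⟨isClosed_SOset n, subset_rfl, ?_, ?_, ?_,
    genSet_subset_SOset n⟩) ?_
  · exact hSO ▸ one_mem _
  · rw [hSO]; exact fun a ha b hb => mul_mem ha hb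
  · rw [hSO]
    intro a ha
    rw [inv_eq_left_inv ((mem_orthogonalGroup_iff' _ _).mp ha.1)]
    exact transpose_mem_specialOrthogonalGroup ha
  · rintro Q hQ G ⟨-, -, h1, hmul, -, hgen⟩
    rw [hSO] at hQ
    let M : Submonoid (Matrix (Fin n) (Fin n) ℝ) := ⟨⟨G, fun ha hb => hmul _ ha _ hb⟩, h1⟩
    refine (Submonoid.closure_le (S := M)).mpr ?_
      (specialOrthogonalGroup_le_closure_givensRotations n hQ)
    rintro _ ⟨i, j, θ, hij, rfl⟩
    exact givens_mem_of_genSet_subset (G := M) hgen hij θ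
end

section
/- (Commutativity of the geometric mean) For all symmetric positive definite n×n real matrices A and B, A#B = B#A; that is, A^{1/2}(A^{-1/2} B A^{-1/2})^{1/2} A^{1/2} = B^{1/2}(B^{-1/2} A B^{-1/2})^{1/2} B^{1/2}. -/
open Matrix
open scoped Classical

/-- The geometric mean `A # B = A^{1/2} (A^{-1/2} B A^{-1/2})^{1/2} A^{1/2}` of two
symmetric positive definite matrices `A` and `B` (here `A^{-1/2} = (A^{1/2})⁻¹`). -/
noncomputable def gmean {n : ℕ} (A B : Matrix (Fin n) (Fin n) ℝ) :
    Matrix (Fin n) (Fin n) ℝ :=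
  msqrt A * msqrt ((msqrt A)⁻¹ * B * (msqrt A)⁻¹) * msqrt A

/-!
`A # B` is the unique positive semidefinite solution `X` of the Riccati equation
`X A⁻¹ X = B`: writing `X = S Y S` with `S = A^{1/2}`, the equation becomes
`Y² = S⁻¹ B S⁻¹`, whose only positive semidefinite solution is the square root. Since
`X A⁻¹ X = B` and `X B⁻¹ X = A` are equivalent (invert both sides), `A # B` and `B # A`
solve the same equation.
-/

open scoped MatrixOrder

namespace Matrix

section

variable {m R : Type*} [Fintype m] [DecidableEq m] [CommRing R]

lemma mul_mul_eq_iff_eq_inv_mul_mul_inv {S Y Z : Matrix m m R} (hS : IsUnit S) :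
    S * Y * S = Z ↔ Y = S⁻¹ * Z * S⁻¹ := by
  have := hS.invertible
  constructor <;> rintro rfl <;> simp [mul_assoc]

lemma mul_inv_mul_eq_symm {A B X : Matrix m m R} (hA : IsUnit A) (hB : IsUnit B)
    (h : X * A⁻¹ * X = B) : X * B⁻¹ * X = A := by
  have hX : IsUnit X := isUnit_of_mul_isUnit_right (h ▸ hB : IsUnit (X * A⁻¹ * X))
  have := hA.invertible
  have := hX.invertible
  rw [← h, mul_inv_rev, mul_inv_rev, inv_inv_of_invertible]
  simp [mul_assoc]

end

variable {n : ℕ} {A B X Y : Matrix (Fin n) (Fin n) ℝ}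

lemma msqrt_eq_cfcSqrt (hA : A.PosSemidef) : msqrt A = CFC.sqrt A := by
  rw [msqrt, dif_pos hA, CFC.sqrt_eq_cfc, cfc_nnreal_eq_real _ A, hA.1.cfc_eq]
  simp only [IsHermitian.cfc, Unitary.conjStarAlgAut_apply]
  congr 3
  funext i
  simp [Real.coe_sqrt, Real.coe_toNNReal', max_eq_left (hA.eigenvalues_nonneg i)]

lemma PosSemidef.msqrt (hA : A.PosSemidef) : (msqrt A).PosSemidef := by
  rw [msqrt_eq_cfcSqrt hA]
  exact (CFC.sqrt_nonneg A).posSemidef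

lemma msqrt_mul_self (hA : A.PosSemidef) : msqrt A * msqrt A = A := by
  rw [msqrt_eq_cfcSqrt hA]
  exact CFC.sqrt_mul_sqrt_self A hA.nonneg

lemma msqrt_eq_iff (hA : A.PosSemidef) : msqrt A = Y ↔ Y.PosSemidef ∧ Y * Y = A := by
  refine ⟨fun h => h ▸ ⟨hA.msqrt, msqrt_mul_self hA⟩, fun ⟨hY, hYA⟩ => ?_⟩
  rw [msqrt_eq_cfcSqrt hA]
  exact CFC.sqrt_unique hYA hY.nonneg

lemma PosDef.isUnit_msqrt (hA : A.PosDef) : IsUnit (msqrt A) := by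
  rw [isUnit_iff_isUnit_det]
  apply isUnit_of_mul_isUnit_left (y := (msqrt A).det)
  rw [← det_mul, msqrt_mul_self hA.posSemidef, ← isUnit_iff_isUnit_det]
  exact hA.isUnit

lemma gmean_eq_iff (hA : A.PosDef) (hB : B.PosSemidef) :
    gmean A B = X ↔ X.PosSemidef ∧ X * A⁻¹ * X = B := by
  set S := msqrt A
  have hSS : S * S = A := msqrt_mul_self hA.posSemidef
  have hSH : S.IsHermitian := hA.posSemidef.msqrt.1
  have hSu : IsUnit S := hA.isUnit_msqrt
  have := hSu.invertible
  have hC : (S⁻¹ * B * S⁻¹).PosSemidef := by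
    simpa only [hSH.inv.eq] using hB.conjTranspose_mul_mul_same S⁻¹
  obtain ⟨Y, rfl⟩ : ∃ Y, X = S * Y * S := ⟨S⁻¹ * X * S⁻¹, by simp [mul_assoc]⟩
  have hconj : (S * Y * S).PosSemidef ↔ Y.PosSemidef := by
    simpa only [hSH.star_eq] using hSu.posSemidef_star_left_conjugate_iff (x := Y)
  have hRiccati : S * Y * S * A⁻¹ * (S * Y * S) = S * (Y * Y) * S := by
    rw [← hSS, mul_inv_rev]
    simp [mul_assoc]
  have hY : S⁻¹ * (S * Y * S) * S⁻¹ = Y := by simp [mul_assoc]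
  rw [hRiccati, mul_mul_eq_iff_eq_inv_mul_mul_inv hSu, hconj, gmean,
    mul_mul_eq_iff_eq_inv_mul_mul_inv hSu, hY]
  exact msqrt_eq_iff hC

end Matrix

/-- **Commutativity of the geometric mean.**  For all symmetric positive definite
matrices `A` and `B`, `A # B = B # A`, i.e.
`A^{1/2}(A^{-1/2} B A^{-1/2})^{1/2} A^{1/2} = B^{1/2}(B^{-1/2} A B^{-1/2})^{1/2} B^{1/2}`. -/
theorem statement12 (n : ℕ) (A B : Matrix (Fin n) (Fin n) ℝ)
    (hA : A.PosDef) (hB : B.PosDef) :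
    gmean A B = gmean B A := by
  obtain ⟨hpsd, hRiccati⟩ := (gmean_eq_iff hA hB.posSemidef).mp rfl
  refine ((gmean_eq_iff hB hA.posSemidef).mpr ⟨hpsd, ?_⟩).symm
  exact mul_inv_mul_eq_symm hA.isUnit hB.isUnit hRiccati
end
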